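/- arXiv:2405.04805 — 5 statements merged into one kernel-verified Lean document; each statement's English description precedes it below -/
import Mathlib

section
/- Let X, Y be symmetric positive semidefinite n×n matrices with Y ≠ 0. Then sup over v ∉ ker Y of (vᵀXv)/(vᵀYv) equals inf{α ≥ 0 : αY − X ⪰ 0} (with the convention that the infimum of the empty set is +∞, and the supremum may be +∞). -/
/-!
If `αY - X ⪰ 0` then `vᵀXv ≤ α vᵀYv`, so every Rayleigh quotient is at most every feasible `α`.
Conversely, if all quotients are bounded by `K`, the quadratic form of `KY - X` is nonnegative
outside `ker Y`; since `Y ≠ 0`, the complement of the proper subspace `ker Y` is dense, so by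
continuity the form is nonnegative everywhere and `K` is feasible.
-/

open Matrix
open scoped ENNReal

/-- Extended maximum generalized eigenvalue: `inf {α ≥ 0 | αY − X ⪰ 0}` with `inf ∅ = ∞`. -/
noncomputable def lamMax {n : ℕ} (X Y : Matrix (Fin n) (Fin n) ℝ) : ℝ≥0∞ :=
  ⨅ α : {α : ℝ // 0 ≤ α ∧ (α • Y - X).PosSemidef}, ENNReal.ofReal (α : ℝ)

namespace Matrix

variable {m n : Type*} [Fintype n]

theorem dense_setOf_mulVec_ne_zero {𝕜 : Type*} [NontriviallyNormedField 𝕜]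
    {A : Matrix m n 𝕜} (hA : A ≠ 0) : Dense {v : n → 𝕜 | A *ᵥ v ≠ 0} := by
  have hker : LinearMap.ker A.mulVecLin ≠ ⊤ := fun h =>
    hA <| mulVec_injective <| funext fun v => by
      simpa using LinearMap.ext_iff.1 (LinearMap.ker_eq_top.1 h) v
  have hset : {v | A *ᵥ v ≠ 0} = (LinearMap.ker A.mulVecLin : Set (n → 𝕜))ᶜ := by ext; simp
  rw [hset, ← interior_eq_empty_iff_dense_compl, ← Set.not_nonempty_iff_eq_empty]
  exact fun h => hker (Submodule.eq_top_of_nonempty_interior' _ h)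

theorem PosSemidef.of_dotProduct_mulVec_nonneg_of_mulVec_ne_zero {A : Matrix n n ℝ}
    {B : Matrix m n ℝ} (hA : A.IsHermitian) (hB : B ≠ 0)
    (h : ∀ v, B *ᵥ v ≠ 0 → 0 ≤ v ⬝ᵥ A *ᵥ v) : A.PosSemidef := by
  refine .of_dotProduct_mulVec_nonneg hA fun v => ?_
  have hclosed : IsClosed {v : n → ℝ | 0 ≤ v ⬝ᵥ A *ᵥ v} :=
    isClosed_le continuous_const <|
      continuous_id.dotProduct (continuous_const.matrix_mulVec continuous_id)
  simpa using hclosed.closure_subset_iff.2 h (dense_setOf_mulVec_ne_zero hB v)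

variable {X Y : Matrix n n ℝ}

theorem PosSemidef.dotProduct_mulVec_pos_of_mulVec_ne_zero (hY : Y.PosSemidef) {v : n → ℝ}
    (hv : Y *ᵥ v ≠ 0) : 0 < v ⬝ᵥ Y *ᵥ v :=
  (hY.dotProduct_mulVec_nonneg v).lt_of_ne' fun h => hv ((hY.dotProduct_mulVec_zero_iff v).1 h)

theorem dotProduct_smul_sub_mulVec (α : ℝ) (v : n → ℝ) :
    v ⬝ᵥ (α • Y - X) *ᵥ v = α * (v ⬝ᵥ Y *ᵥ v) - v ⬝ᵥ X *ᵥ v := by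
  simp only [sub_mulVec, smul_mulVec, dotProduct_sub, dotProduct_smul, smul_eq_mul]

theorem div_le_of_posSemidef_smul_sub (hY : Y.PosSemidef) {α : ℝ}
    (hα : (α • Y - X).PosSemidef) {v : n → ℝ} (hv : Y *ᵥ v ≠ 0) :
    v ⬝ᵥ X *ᵥ v / (v ⬝ᵥ Y *ᵥ v) ≤ α := by
  have hq := hα.dotProduct_mulVec_nonneg v
  rw [star_trivial, dotProduct_smul_sub_mulVec] at hq
  rw [div_le_iff₀ (hY.dotProduct_mulVec_pos_of_mulVec_ne_zero hv)]
  linarith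

theorem posSemidef_smul_sub_of_div_le (hX : X.IsHermitian) (hY : Y.PosSemidef) (hY0 : Y ≠ 0)
    {α : ℝ} (h : ∀ v, Y *ᵥ v ≠ 0 → v ⬝ᵥ X *ᵥ v / (v ⬝ᵥ Y *ᵥ v) ≤ α) :
    (α • Y - X).PosSemidef := by
  refine .of_dotProduct_mulVec_nonneg_of_mulVec_ne_zero
    ((hY.isHermitian.smul (.all α)).sub hX) hY0 fun v hv => ?_
  have hq := h v hv
  rw [div_le_iff₀ (hY.dotProduct_mulVec_pos_of_mulVec_ne_zero hv)] at hq
  rw [dotProduct_smul_sub_mulVec]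
  linarith

end Matrix

theorem lamMax_le_ofReal {n : ℕ} {X Y : Matrix (Fin n) (Fin n) ℝ} (hX : X.IsHermitian)
    (hY : Y.PosSemidef) (hY0 : Y ≠ 0) {α : ℝ} (hα : 0 ≤ α)
    (h : ∀ v, Y *ᵥ v ≠ 0 → v ⬝ᵥ X *ᵥ v / (v ⬝ᵥ Y *ᵥ v) ≤ α) :
    lamMax X Y ≤ ENNReal.ofReal α :=
  iInf_le_of_le ⟨α, hα, posSemidef_smul_sub_of_div_le hX hY hY0 h⟩ le_rfl

/-- For symmetric positive semidefinite `X, Y` with `Y ≠ 0`, the supremum over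
`v ∉ ker Y` of the Rayleigh quotient `(vᵀXv)/(vᵀYv)` equals `inf {α ≥ 0 | αY − X ⪰ 0}`
(in `[0,∞]`, with `inf ∅ = ∞`). -/
theorem stmt_3 {n : ℕ} (X Y : Matrix (Fin n) (Fin n) ℝ)
    (hX : X.PosSemidef) (hY : Y.PosSemidef) (hY0 : Y ≠ 0) :
    (⨆ v : {v : Fin n → ℝ // Y *ᵥ v ≠ 0},
        ENNReal.ofReal (((v : Fin n → ℝ) ⬝ᵥ (X *ᵥ (v : Fin n → ℝ))) /
          ((v : Fin n → ℝ) ⬝ᵥ (Y *ᵥ (v : Fin n → ℝ))))) = lamMax X Y := by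
  refine le_antisymm (le_iInf fun α => iSup_le fun v =>
    ENNReal.ofReal_le_ofReal (div_le_of_posSemidef_smul_sub hY α.2.2 v.2)) ?_
  set S := ⨆ v : {v : Fin n → ℝ // Y *ᵥ v ≠ 0},
    ENNReal.ofReal ((v : Fin n → ℝ) ⬝ᵥ X *ᵥ v / ((v : Fin n → ℝ) ⬝ᵥ Y *ᵥ v))
  rcases eq_or_ne S ⊤ with hS | hS
  · exact hS ▸ le_top
  rw [← ENNReal.ofReal_toReal hS]
  exact lamMax_le_ofReal hX.isHermitian hY hY0 ENNReal.toReal_nonneg fun v hv =>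
    (ENNReal.ofReal_le_iff_le_toReal hS).1 (le_iSup_of_le ⟨v, hv⟩ le_rfl)
end

section
/- Let X, Y be symmetric positive semidefinite matrices with ker Y ⊆ ker X. Then λ_max(X, Y + εI) converges to λ_max(X,Y) as ε → 0⁺, where λ_max(X,Y) = inf{α ≥ 0 : αY − X ⪰ 0} is finite in this case. -/
open Matrix Filter Topology
open scoped ENNReal

open scoped ComplexOrder in
theorem Matrix.isClosed_setOf_posSemidef {m 𝕜 : Type*} [Fintype m] [RCLike 𝕜] :
    IsClosed {A : Matrix m m 𝕜 | A.PosSemidef} := by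
  simp_rw [posSemidef_iff_dotProduct_mulVec, Set.ofPred_and, Set.ofPred_forall]
  exact (isClosed_eq continuous_id.matrix_conjTranspose continuous_id).inter
    (isClosed_iInter fun x => isClosed_le continuous_const (by fun_prop))

section lamMax

variable {n : ℕ} {X Y : Matrix (Fin n) (Fin n) ℝ}

theorem lamMax_le_ofReal_s9 {α : ℝ} (hα : 0 ≤ α) (h : (α • Y - X).PosSemidef) :
    lamMax X Y ≤ ENNReal.ofReal α :=
  iInf_le (fun α : {α : ℝ // 0 ≤ α ∧ (α • Y - X).PosSemidef} => ENNReal.ofReal α) ⟨α, hα, h⟩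

theorem posSemidef_smul_sub_of_lamMax_lt (hY : Y.PosSemidef) {β : ℝ}
    (h : lamMax X Y < ENNReal.ofReal β) : (β • Y - X).PosSemidef := by
  obtain ⟨⟨α, _, hα⟩, hlt⟩ := iInf_lt_iff.mp h
  have hαβ : α < β := (ENNReal.ofReal_lt_ofReal_iff'.mp hlt).1
  have hsplit : β • Y - X = (α • Y - X) + (β - α) • Y := by module
  exact hsplit ▸ hα.add (hY.smul (sub_nonneg.mpr hαβ.le))

theorem lamMax_le_lamMax_of_posSemidef_sub {Y' : Matrix (Fin n) (Fin n) ℝ}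
    (h : (Y' - Y).PosSemidef) : lamMax X Y' ≤ lamMax X Y :=
  le_iInf fun ⟨α, hα, hαY⟩ => lamMax_le_ofReal_s9 hα <| by
    have hsplit : α • Y' - X = (α • Y - X) + α • (Y' - Y) := by module
    exact hsplit ▸ hαY.add (h.smul hα)

variable (X Y) in
theorem antitone_lamMax_add_smul_one :
    Antitone fun ε : ℝ => lamMax X (Y + ε • (1 : Matrix (Fin n) (Fin n) ℝ)) := by
  intro ε ε' hε
  refine lamMax_le_lamMax_of_posSemidef_sub ?_
  have hsplit : Y + ε' • (1 : Matrix (Fin n) (Fin n) ℝ) - (Y + ε • 1) = (ε' - ε) • 1 := by module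
  exact hsplit ▸ PosSemidef.one.smul (sub_nonneg.mpr hε)

theorem lamMax_le_of_forall_pos (hY : Y.PosSemidef) {c : ℝ≥0∞}
    (h : ∀ ε : ℝ, 0 < ε → lamMax X (Y + ε • (1 : Matrix (Fin n) (Fin n) ℝ)) ≤ c) :
    lamMax X Y ≤ c := by
  refine le_of_forall_gt_imp_ge_of_dense fun d hcd => ?_
  rcases eq_or_ne d ⊤ with rfl | hd
  · exact le_top
  set β := d.toReal
  have hfeas : ∀ ε : ℝ, 0 < ε → (β • (Y + ε • (1 : Matrix (Fin n) (Fin n) ℝ)) - X).PosSemidef :=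
    fun ε hε => posSemidef_smul_sub_of_lamMax_lt (hY.add (PosSemidef.one.smul hε.le))
      ((h ε hε).trans_lt (by rwa [ENNReal.ofReal_toReal hd]))
  have hlim : Tendsto (fun ε : ℝ => β • (Y + ε • (1 : Matrix (Fin n) (Fin n) ℝ)) - X)
      (𝓝[>] 0) (𝓝 (β • Y - X)) := by
    have hcont : Continuous fun ε : ℝ => β • (Y + ε • (1 : Matrix (Fin n) (Fin n) ℝ)) - X := by
      fun_prop
    simpa using tendsto_nhdsWithin_of_tendsto_nhds (hcont.tendsto 0)
  have hβY : (β • Y - X).PosSemidef :=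
    isClosed_setOf_posSemidef.mem_of_tendsto hlim (eventually_nhdsWithin_of_forall hfeas)
  simpa [β, ENNReal.ofReal_toReal hd] using lamMax_le_ofReal_s9 ENNReal.toReal_nonneg hβY

end lamMax

theorem stmt_9_general {n : ℕ} (X Y : Matrix (Fin n) (Fin n) ℝ)
    (hY : Y.PosSemidef) :
    Tendsto (fun ε : ℝ => lamMax X (Y + ε • (1 : Matrix (Fin n) (Fin n) ℝ)))
      (𝓝[>] (0 : ℝ)) (𝓝 (lamMax X Y)) := by
  convert (antitone_lamMax_add_smul_one X Y).tendsto_nhdsGT 0 using 2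
  refine le_antisymm (lamMax_le_of_forall_pos hY fun ε hε => le_sSup ⟨ε, hε, rfl⟩) ?_
  refine sSup_le ?_
  rintro _ ⟨ε, hε, rfl⟩
  simpa using antitone_lamMax_add_smul_one X Y hε.le

/-- For symmetric positive semidefinite `X, Y` with `ker Y ⊆ ker X`,
`λ_max(X, Y + εI) → λ_max(X,Y)` as `ε → 0⁺`. -/
theorem stmt_9 {n : ℕ} (X Y : Matrix (Fin n) (Fin n) ℝ)
    (hX : X.PosSemidef) (hY : Y.PosSemidef)
    (hker : ∀ v : Fin n → ℝ, Y *ᵥ v = 0 → X *ᵥ v = 0) :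
    Tendsto (fun ε : ℝ => lamMax X (Y + ε • (1 : Matrix (Fin n) (Fin n) ℝ)))
      (𝓝[>] (0 : ℝ)) (𝓝 (lamMax X Y)) :=
  stmt_9_general X Y hY
end

section
/- Let K be a symmetric positive semidefinite n×n matrix and Q an n×d matrix. Then inf{α ≥ 0 : αK − QQᵀ ⪰ 0} = inf{α ≥ 0 : [[K, Q],[Qᵀ, αI]] ⪰ 0}. -/
open Matrix
open scoped ENNReal

private lemma psd_smul {m : Type*} [Fintype m] {c : ℝ} (hc : 0 ≤ c)
    {M : Matrix m m ℝ} (hM : M.PosSemidef) : (c • M).PosSemidef := by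
  refine .of_dotProduct_mulVec_nonneg ?_ fun x => ?_
  · unfold Matrix.IsHermitian
    rw [conjTranspose_smul, star_trivial, hM.1.eq]
  · rw [smul_mulVec, dotProduct_smul, smul_eq_mul]
    exact mul_nonneg hc (hM.dotProduct_mulVec_nonneg x)

private lemma psd_smul_iff {m : Type*} [Fintype m] {c : ℝ} (hc : 0 < c)
    {M : Matrix m m ℝ} : (c • M).PosSemidef ↔ M.PosSemidef := by
  constructor
  · intro h
    have := psd_smul (inv_nonneg.mpr hc.le) h
    rwa [smul_smul, inv_mul_cancel₀ hc.ne', one_smul] at this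
  · exact psd_smul hc.le

private lemma lin_nonneg_eq_zero {a b : ℝ} (h : ∀ t : ℝ, 0 ≤ a + t * b) : b = 0 := by
  by_contra hb
  have := h (-(a + 1) / b)
  rw [div_mul_cancel₀ _ hb] at this
  linarith

private lemma bilin_zero_imp {n d : ℕ} {Q : Matrix (Fin n) (Fin d) ℝ}
    (h : ∀ (x : Fin n → ℝ) (y : Fin d → ℝ), x ⬝ᵥ Q *ᵥ y = 0) : Q = 0 := by
  have hQ : ∀ y : Fin d → ℝ, Q *ᵥ y = 0 := by
    intro y
    have := h (Q *ᵥ y) y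
    exact dotProduct_self_eq_zero.mp this
  ext i j
  have := congrFun (hQ (Pi.single j 1)) i
  simpa [mulVec_single] using this

private lemma key_equiv {n d : ℕ} (K : Matrix (Fin n) (Fin n) ℝ) (Q : Matrix (Fin n) (Fin d) ℝ)
    (hK : K.PosSemidef) (α : ℝ) (hα : 0 ≤ α) :
    ((α : ℝ) • K - Q * Qᵀ).PosSemidef ↔
      (Matrix.fromBlocks K Q Qᵀ ((α : ℝ) • (1 : Matrix (Fin d) (Fin d) ℝ))).PosSemidef := by
  rcases hα.lt_or_eq with hpos | hzero
  · -- α > 0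
    have hQH : Qᵀ = Qᴴ := (conjTranspose_eq_transpose_of_trivial Q).symm
    set D : Matrix (Fin d) (Fin d) ℝ := α • 1 with hD
    have hDdiag : D = Matrix.diagonal (fun _ => α) := by
      ext i j
      by_cases h : i = j <;>
        simp [hD, Matrix.one_apply, Matrix.diagonal_apply, h]
    have hDpd : D.PosDef := by
      rw [hDdiag]
      exact Matrix.posDef_diagonal_iff.mpr (fun _ => hpos)
    haveI : Invertible D := D.invertibleOfIsUnitDet hDpd.det_pos.ne'.isUnit
    have hDinv : D⁻¹ = α⁻¹ • (1 : Matrix (Fin d) (Fin d) ℝ) := by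
      apply Matrix.inv_eq_right_inv
      rw [hD, Matrix.smul_mul, Matrix.mul_smul, one_mul, smul_smul,
        mul_inv_cancel₀ hpos.ne', one_smul]
    have hfb : (Matrix.fromBlocks K Q Qᵀ D).PosSemidef ↔ (K - Q * D⁻¹ * Qᵀ).PosSemidef := by
      rw [hQH]; exact Matrix.PosDef.fromBlocks₂₂ K Q hDpd
    rw [hfb]
    have heq : K - Q * D⁻¹ * Qᵀ = α⁻¹ • ((α : ℝ) • K - Q * Qᵀ) := by
      rw [hDinv, Matrix.mul_smul, Matrix.mul_one, Matrix.smul_mul, smul_sub, smul_smul,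
        inv_mul_cancel₀ hpos.ne', one_smul]
    rw [heq, psd_smul_iff (inv_pos.mpr hpos)]
  · -- α = 0
    subst hzero
    rw [zero_smul, zero_smul, zero_sub]
    constructor
    · intro h
      -- -QQᵀ PSD forces Q = 0
      have hQ0 : Q = 0 := by
        apply bilin_zero_imp
        intro x y
        have h2 := h.dotProduct_mulVec_nonneg x
        rw [star_trivial, Matrix.neg_mulVec, dotProduct_neg, ← Matrix.mulVec_mulVec,
          dotProduct_mulVec, ← Matrix.mulVec_transpose] at h2
        have hnn : 0 ≤ (Qᵀ *ᵥ x) ⬝ᵥ (Qᵀ *ᵥ x) :=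
          Finset.sum_nonneg fun i _ => mul_self_nonneg _
        have hv : Qᵀ *ᵥ x = 0 := dotProduct_self_eq_zero.mp (le_antisymm (by linarith) hnn)
        rw [dotProduct_mulVec, ← Matrix.mulVec_transpose, hv, zero_dotProduct]
      subst hQ0
      refine .of_dotProduct_mulVec_nonneg ?_ fun v => ?_
      · unfold Matrix.IsHermitian
        rw [Matrix.fromBlocks_conjTranspose, hK.1.eq]
        simp
      · have hv : v = Sum.elim (fun i => v (Sum.inl i)) (fun j => v (Sum.inr j)) := by
          ext (i | j) <;> rfl
        rw [hv, star_trivial, Matrix.fromBlocks_mulVec]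
        simp only [Matrix.zero_mulVec, Matrix.transpose_zero, add_zero, zero_add,
          Matrix.mulVec_zero]
        rw [sumElim_dotProduct_sumElim]
        have := hK.dotProduct_mulVec_nonneg (fun i => v (Sum.inl i))
        rw [star_trivial] at this
        simpa using this
    · intro h
      have hQ0 : Q = 0 := by
        apply bilin_zero_imp
        intro x y
        have hb : (2 : ℝ) * (x ⬝ᵥ Q *ᵥ y) = 0 := by
          apply lin_nonneg_eq_zero (a := x ⬝ᵥ K *ᵥ x)
          intro t
          have h2 := h.dotProduct_mulVec_nonneg (Sum.elim x (t • y))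
          rw [star_trivial, Matrix.fromBlocks_mulVec, sumElim_dotProduct_sumElim] at h2
          have hyx : y ⬝ᵥ Qᵀ *ᵥ x = x ⬝ᵥ Q *ᵥ y := by
            rw [dotProduct_mulVec, Matrix.vecMul_transpose, dotProduct_comm]
          simp only [Sum.elim_comp_inl, Sum.elim_comp_inr, Matrix.zero_mulVec, add_zero,
            Matrix.mulVec_smul, dotProduct_add, dotProduct_smul, smul_dotProduct,
            smul_eq_mul, hyx, dotProduct_zero, mul_zero, add_zero] at h2
          linarith
        linarith
      subst hQ0
      simp only [Matrix.transpose_zero, Matrix.zero_mul, neg_zero]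
      exact Matrix.PosSemidef.zero

/-- For `K ⪰ 0` and `Q ∈ ℝ^{n×d}`,
`inf {α ≥ 0 | αK − QQᵀ ⪰ 0} = inf {α ≥ 0 | [[K, Q],[Qᵀ, αI]] ⪰ 0}` (both possibly `∞`). -/
theorem stmt_12 {n d : ℕ} (K : Matrix (Fin n) (Fin n) ℝ) (Q : Matrix (Fin n) (Fin d) ℝ)
    (hK : K.PosSemidef) :
    (⨅ α : {α : ℝ // 0 ≤ α ∧ ((α : ℝ) • K - Q * Qᵀ).PosSemidef}, ENNReal.ofReal (α : ℝ)) =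
    ⨅ α : {α : ℝ // 0 ≤ α ∧
        (Matrix.fromBlocks K Q Qᵀ ((α : ℝ) • (1 : Matrix (Fin d) (Fin d) ℝ))).PosSemidef},
      ENNReal.ofReal (α : ℝ) := by
  apply le_antisymm
  · exact le_iInf fun β =>
      iInf_le_of_le ⟨β.1, β.2.1, (key_equiv K Q hK β.1 β.2.1).mpr β.2.2⟩ le_rfl
  · exact le_iInf fun β =>
      iInf_le_of_le ⟨β.1, β.2.1, (key_equiv K Q hK β.1 β.2.1).mp β.2.2⟩ le_rfl
end

section
/- For K ∈ 𝕊ⁿ_{⪰0} and Q ∈ ℝ^{n×d}, inf{α ≥ 0 : [[K, Q],[Qᵀ, αI]] ⪰ 0} equals sup over unit vectors p̂ ∈ ℝ^d of sup over v ∈ ℝⁿ of (2p̂ᵀQᵀv − vᵀKv). -/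
open Matrix
open scoped ENNReal

/-!
Testing the block matrix on `(v, -p)` shows that `[[K, Q], [Qᵀ, αI]] ⪰ 0` holds exactly when
`2 pᵀQᵀv − vᵀKv ≤ α pᵀp` for all `p, v`; since the left side is homogeneous of degree two in
`(p, v)`, it suffices to ask this for unit vectors `p`. Hence the feasible `α ≥ 0` are the
nonnegative upper bounds of the objective over unit `p`, and the infimum of the upper bounds is
the supremum, in `[0, ∞]`.
-/

section BlockQuadraticForm

variable {m n : Type*} [Fintype m] [Fintype n]

lemma sumElim_dotProduct_fromBlocks_transpose_mulVec {R : Type*} [CommRing R]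
    (K : Matrix m m R) (Q : Matrix m n R) (D : Matrix n n R) (v : m → R) (p : n → R) :
    Sum.elim v p ⬝ᵥ fromBlocks K Q Qᵀ D *ᵥ Sum.elim v p =
      v ⬝ᵥ K *ᵥ v + 2 * (p ⬝ᵥ Qᵀ *ᵥ v) + p ⬝ᵥ D *ᵥ p := by
  have hQ : v ⬝ᵥ Q *ᵥ p = p ⬝ᵥ Qᵀ *ᵥ v := by
    rw [dotProduct_mulVec, mulVec_transpose, dotProduct_comm]
  rw [fromBlocks_mulVec, sumElim_dotProduct_sumElim, dotProduct_add, dotProduct_add]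
  simp only [Sum.elim_comp_inl, Sum.elim_comp_inr]
  rw [hQ]
  ring

variable (K : Matrix m m ℝ) (Q : Matrix m n ℝ)

lemma two_dotProduct_sub_le_mul_dotProduct_self (hK : K.PosSemidef) {α : ℝ}
    (h : ∀ p, p ⬝ᵥ p = 1 → ∀ v, 2 * (p ⬝ᵥ Qᵀ *ᵥ v) - v ⬝ᵥ K *ᵥ v ≤ α) (p : n → ℝ) (v : m → ℝ) :
    2 * (p ⬝ᵥ Qᵀ *ᵥ v) - v ⬝ᵥ K *ᵥ v ≤ α * (p ⬝ᵥ p) := by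
  rcases eq_or_ne p 0 with rfl | hp
  · simpa using hK.dotProduct_mulVec_nonneg v
  have hpp : 0 < p ⬝ᵥ p := by simpa using dotProduct_self_star_pos_iff.2 hp
  set c := √(p ⬝ᵥ p)
  have hc : 0 < c := Real.sqrt_pos.2 hpp
  have hcc : c * c = p ⬝ᵥ p := Real.mul_self_sqrt hpp.le
  have hunit : c⁻¹ • p ⬝ᵥ c⁻¹ • p = 1 := by
    rw [smul_dotProduct, dotProduct_smul, ← hcc, smul_eq_mul, smul_eq_mul]
    field_simp
  have hscaled := h _ hunit (c⁻¹ • v)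
  simp only [smul_dotProduct, dotProduct_smul, mulVec_smul, smul_eq_mul] at hscaled
  calc 2 * (p ⬝ᵥ Qᵀ *ᵥ v) - v ⬝ᵥ K *ᵥ v
      = (c * c) * (2 * (c⁻¹ * (c⁻¹ * (p ⬝ᵥ Qᵀ *ᵥ v))) - c⁻¹ * (c⁻¹ * (v ⬝ᵥ K *ᵥ v))) := by
        field_simp
    _ ≤ (c * c) * α := by gcongr
    _ = α * (p ⬝ᵥ p) := by rw [hcc, mul_comm]

variable [DecidableEq n]

theorem posSemidef_fromBlocks_smul_one_iff (hK : K.PosSemidef) (α : ℝ) :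
    (fromBlocks K Q Qᵀ (α • (1 : Matrix n n ℝ))).PosSemidef ↔
      ∀ p, p ⬝ᵥ p = 1 → ∀ v, 2 * (p ⬝ᵥ Qᵀ *ᵥ v) - v ⬝ᵥ K *ᵥ v ≤ α := by
  have hform (v : m → ℝ) (p : n → ℝ) :
      Sum.elim v p ⬝ᵥ fromBlocks K Q Qᵀ (α • 1) *ᵥ Sum.elim v p =
        v ⬝ᵥ K *ᵥ v + 2 * (p ⬝ᵥ Qᵀ *ᵥ v) + α * (p ⬝ᵥ p) := by
    rw [sumElim_dotProduct_fromBlocks_transpose_mulVec, smul_mulVec, one_mulVec,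
      dotProduct_smul, smul_eq_mul]
  constructor
  · intro hpsd p hp v
    have := hpsd.dotProduct_mulVec_nonneg (Sum.elim v (-p))
    rw [star_trivial, hform] at this
    simp only [neg_dotProduct, dotProduct_neg, neg_neg, hp] at this
    linarith
  · intro h
    refine .of_dotProduct_mulVec_nonneg (hK.1.fromBlocks rfl ?_) fun x => ?_
    · simp [IsHermitian]
    rw [star_trivial, ← Sum.elim_comp_inl_inr x, hform]
    have := two_dotProduct_sub_le_mul_dotProduct_self K Q hK h (-(x ∘ Sum.inr)) (x ∘ Sum.inl)
    rw [neg_dotProduct, neg_dotProduct, dotProduct_neg, neg_neg] at this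
    linarith

end BlockQuadraticForm

theorem iInf_ofReal_upperBounds_eq_iSup_ofReal {ι : Sort*} (g : ι → ℝ) :
    ⨅ α : {α : ℝ // 0 ≤ α ∧ ∀ i, g i ≤ α}, ENNReal.ofReal α = ⨆ i, ENNReal.ofReal (g i) := by
  refine le_antisymm ?_ (le_iInf fun α => iSup_le fun i => ENNReal.ofReal_le_ofReal (α.2.2 i))
  set S := ⨆ i, ENNReal.ofReal (g i)
  rcases eq_or_ne S ⊤ with hS | hS
  · exact hS ▸ le_top
  have hbound (i : ι) : g i ≤ S.toReal :=
    (ENNReal.ofReal_le_iff_le_toReal hS).1 (le_iSup (fun i => ENNReal.ofReal (g i)) i)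
  calc ⨅ α : {α : ℝ // 0 ≤ α ∧ ∀ i, g i ≤ α}, ENNReal.ofReal α
      ≤ ENNReal.ofReal S.toReal := iInf_le_of_le ⟨S.toReal, ENNReal.toReal_nonneg, hbound⟩ le_rfl
    _ = S := ENNReal.ofReal_toReal hS

/-- For `K ⪰ 0` and `Q ∈ ℝ^{n×d}`,
`inf {α ≥ 0 | [[K, Q],[Qᵀ, αI]] ⪰ 0}` equals
`sup_{‖p̂‖=1} sup_{v} (2 p̂ᵀQᵀv − vᵀKv)`, both in `[0,∞]`. -/
theorem stmt_13 {n d : ℕ} (K : Matrix (Fin n) (Fin n) ℝ) (Q : Matrix (Fin n) (Fin d) ℝ)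
    (hK : K.PosSemidef) :
    (⨅ α : {α : ℝ // 0 ≤ α ∧
        (Matrix.fromBlocks K Q Qᵀ ((α : ℝ) • (1 : Matrix (Fin d) (Fin d) ℝ))).PosSemidef},
      ENNReal.ofReal (α : ℝ)) =
    ⨆ p : {p : Fin d → ℝ // p ⬝ᵥ p = 1}, ⨆ v : Fin n → ℝ,
      ENNReal.ofReal (2 * ((p : Fin d → ℝ) ⬝ᵥ (Qᵀ *ᵥ v)) - v ⬝ᵥ (K *ᵥ v)) := by
  have hfeasible :
      (fun α : ℝ => 0 ≤ α ∧ (fromBlocks K Q Qᵀ (α • (1 : Matrix (Fin d) (Fin d) ℝ))).PosSemidef) =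
        fun α => 0 ≤ α ∧ ∀ pv : {p : Fin d → ℝ // p ⬝ᵥ p = 1} × (Fin n → ℝ),
        2 * ((pv.1 : Fin d → ℝ) ⬝ᵥ (Qᵀ *ᵥ pv.2)) - pv.2 ⬝ᵥ (K *ᵥ pv.2) ≤ α := by
    ext α
    rw [posSemidef_fromBlocks_smul_one_iff K Q hK]
    simp only [Prod.forall, Subtype.forall]
  rw [hfeasible, iInf_ofReal_upperBounds_eq_iSup_ofReal, iSup_prod]
end

section
/- Let K ∈ 𝕊ⁿ_{⪰0} and Q ∈ ℝ^{n×d} satisfy Im Q ⊆ Im K. Then there exists U ∈ ℝ^{n×d} with KU = Q, the matrix QᵀU is symmetric, and λ_max(QQᵀ, K) = λ_max(QᵀU), the maximum (standard) eigenvalue of QᵀU. -/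
open Matrix
open scoped ENNReal

/-!
Pick `U` with `KU = Q`; then `QᵀU = UᵀKU` is positive semidefinite and we let `μ` be its
largest eigenvalue. Writing `K = BᵀB` and `A = BU` we get `QᵀU = AᵀA` and
`μK − QQᵀ = Bᵀ(μ − AAᵀ)B`, which is positive semidefinite because `‖Aᵀx‖² ≤ μ‖x‖²` follows
from `‖Aw‖² ≤ μ‖w‖²` by Cauchy–Schwarz. Conversely, if `αK − QQᵀ ⪰ 0`, testing it on `Uv` for
an eigenvector `v` of `QᵀU` with eigenvalue `μ` gives `αμ‖v‖² ≥ μ²‖v‖²`, so `μ ≤ α`.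
-/

namespace Matrix

variable {m n k : Type*} [Fintype n] [Fintype k]

theorem exists_mul_eq_of_forall_exists_mulVec_eq {l R : Type*} [Fintype l] [DecidableEq l]
    [CommSemiring R] {A : Matrix m n R} {B : Matrix m l R}
    (h : ∀ p : l → R, ∃ u : n → R, A *ᵥ u = B *ᵥ p) : ∃ X : Matrix n l R, A * X = B := by
  choose u hu using fun j : l => h (Pi.single j 1)
  exact ⟨(of u)ᵀ, ext fun i j => (congr_fun (hu j) i).trans (congr_fun (mulVec_single_one B j) i)⟩

theorem mem_spectrum_iff_exists_mulVec_eq_smul [DecidableEq n] {K : Type*} [Field K]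
    {A : Matrix n n K} {μ : K} : μ ∈ spectrum K A ↔ ∃ v ≠ 0, A *ᵥ v = μ • v := by
  rw [← spectrum_toLin', ← Module.End.hasEigenvalue_iff_mem_spectrum]
  constructor
  · intro h
    obtain ⟨v, hv, hv0⟩ := h.exists_hasEigenvector
    exact ⟨v, hv0, Module.End.mem_eigenspace_iff.mp hv⟩
  · rintro ⟨v, hv0, hv⟩
    exact Module.End.hasEigenvalue_of_hasEigenvector ⟨Module.End.mem_eigenspace_iff.mpr hv, hv0⟩

theorem IsHermitian.isGreatest_of_forall_eigenvalues_le [DecidableEq n] {N : Matrix n n ℝ}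
    (hN : N.IsHermitian) {i₀ : n} (h : ∀ i, hN.eigenvalues i ≤ hN.eigenvalues i₀) :
    IsGreatest {μ | ∃ v ≠ 0, N *ᵥ v = μ • v} (hN.eigenvalues i₀) := by
  have hspec : {μ | ∃ v ≠ 0, N *ᵥ v = μ • v} = spectrum ℝ N :=
    Set.ext fun _ => mem_spectrum_iff_exists_mulVec_eq_smul.symm
  rw [hspec, hN.spectrum_real_eq_range_eigenvalues]
  exact ⟨⟨i₀, rfl⟩, by rintro _ ⟨i, rfl⟩; exact h i⟩

open scoped MatrixOrder in
theorem IsHermitian.posSemidef_smul_one_sub_of_eigenvalues_le [DecidableEq n]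
    {N : Matrix n n ℝ} (hN : N.IsHermitian) {μ : ℝ} (h : ∀ i, hN.eigenvalues i ≤ μ) :
    (μ • 1 - N).PosSemidef := by
  rw [← Matrix.le_iff, ← Algebra.algebraMap_eq_smul_one, le_algebraMap_iff_spectrum_le hN,
    hN.spectrum_real_eq_range_eigenvalues]
  rintro _ ⟨i, rfl⟩
  exact h i

theorem dotProduct_sq_le_dotProduct_self_mul {R : Type*} [CommRing R] [LinearOrder R]
    [IsStrictOrderedRing R] (x y : n → R) : (x ⬝ᵥ y) ^ 2 ≤ (x ⬝ᵥ x) * (y ⬝ᵥ y) := by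
  simpa [dotProduct, sq] using Finset.sum_mul_sq_le_sq_mul_sq Finset.univ x y

theorem posSemidef_smul_sub_iff {K M : Matrix n n ℝ} (hK : K.IsHermitian) (hM : M.IsHermitian)
    {α : ℝ} : (α • K - M).PosSemidef ↔ ∀ x, x ⬝ᵥ M *ᵥ x ≤ α * (x ⬝ᵥ K *ᵥ x) := by
  simp only [posSemidef_iff_dotProduct_mulVec, (hK.smul (IsSelfAdjoint.all α)).sub hM, true_and,
    star_trivial, sub_mulVec, smul_mulVec, dotProduct_sub, dotProduct_smul, smul_eq_mul,
    sub_nonneg]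

theorem posSemidef_smul_one_sub_mul_transpose_self [Fintype m] [DecidableEq m] [DecidableEq n]
    {A : Matrix m n ℝ} {μ : ℝ} (hμ : 0 ≤ μ) (h : (μ • 1 - Aᵀ * A).PosSemidef) :
    (μ • 1 - A * Aᵀ).PosSemidef := by
  rw [posSemidef_smul_sub_iff isHermitian_one (by simpa using isHermitian_conjTranspose_mul_self A)]
    at h
  rw [posSemidef_smul_sub_iff isHermitian_one (by simpa using isHermitian_mul_conjTranspose_self A)]
  intro x
  set w := Aᵀ *ᵥ x
  have hAAx : x ⬝ᵥ (A * Aᵀ) *ᵥ x = w ⬝ᵥ w := by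
    rw [← mulVec_mulVec, dotProduct_mulVec, ← mulVec_transpose]
  have hAw : (A *ᵥ w) ⬝ᵥ (A *ᵥ w) ≤ μ * (w ⬝ᵥ w) := by
    simpa [← mulVec_mulVec, dotProduct_mulVec, vecMul_transpose] using h w
  have hcs : (w ⬝ᵥ w) ^ 2 ≤ (x ⬝ᵥ x) * ((A *ᵥ w) ⬝ᵥ (A *ᵥ w)) := by
    rw [show w ⬝ᵥ w = x ⬝ᵥ A *ᵥ w from dotProduct_transpose_mulVec A w x]
    exact dotProduct_sq_le_dotProduct_self_mul x (A *ᵥ w)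
  have hx : 0 ≤ x ⬝ᵥ x := by simpa using dotProduct_star_self_nonneg x
  have hw : 0 ≤ w ⬝ᵥ w := by simpa using dotProduct_star_self_nonneg w
  rw [one_mulVec, hAAx]
  rcases hw.eq_or_lt with hw0 | hw0
  · rw [← hw0]
    exact mul_nonneg hμ hx
  · refine le_of_mul_le_mul_right ?_ hw0
    calc w ⬝ᵥ w * w ⬝ᵥ w = (w ⬝ᵥ w) ^ 2 := (sq _).symm
      _ ≤ (x ⬝ᵥ x) * (μ * (w ⬝ᵥ w)) := hcs.trans (mul_le_mul_of_nonneg_left hAw hx)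
      _ = μ * (x ⬝ᵥ x) * (w ⬝ᵥ w) := by ring

open scoped MatrixOrder in
theorem PosSemidef.posSemidef_smul_sub_mul_transpose [DecidableEq n] [DecidableEq k]
    {K : Matrix n n ℝ} (hK : K.PosSemidef) {Q U : Matrix n k ℝ} (hKU : K * U = Q) {μ : ℝ}
    (hμ : 0 ≤ μ) (h : (μ • 1 - Qᵀ * U).PosSemidef) : (μ • K - Q * Qᵀ).PosSemidef := by
  subst hKU
  obtain ⟨B, rfl⟩ := CStarAlgebra.nonneg_iff_eq_star_mul_self.mp hK.nonneg
  have hBU : (μ • 1 - (B * U)ᵀ * (B * U)).PosSemidef := by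
    simpa [star_eq_conjTranspose, transpose_mul, Matrix.mul_assoc] using h
  convert (posSemidef_smul_one_sub_mul_transpose_self hμ hBU).conjTranspose_mul_mul_same B
    using 1
  simp [star_eq_conjTranspose, transpose_mul, mul_sub, sub_mul, Matrix.mul_assoc]

theorem le_of_posSemidef_smul_sub_mul_transpose {K : Matrix n n ℝ} (hK : K.IsHermitian)
    {Q U : Matrix n k ℝ} (hKU : K * U = Q) {α μ : ℝ} (hα0 : 0 ≤ α)
    (hα : (α • K - Q * Qᵀ).PosSemidef) {v : k → ℝ} (hv0 : v ≠ 0)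
    (hv : (Qᵀ * U) *ᵥ v = μ • v) : μ ≤ α := by
  rw [posSemidef_smul_sub_iff hK (by simpa using isHermitian_mul_conjTranspose_self Q)] at hα
  have hKform : (U *ᵥ v) ⬝ᵥ K *ᵥ (U *ᵥ v) = μ * (v ⬝ᵥ v) := by
    rw [mulVec_mulVec, hKU, ← dotProduct_transpose_mulVec, mulVec_mulVec, hv, dotProduct_smul,
      smul_eq_mul]
  have hQform : (U *ᵥ v) ⬝ᵥ (Q * Qᵀ) *ᵥ (U *ᵥ v) = μ * μ * (v ⬝ᵥ v) := by
    rw [← mulVec_mulVec, dotProduct_mulVec, ← mulVec_transpose, mulVec_mulVec, hv,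
      smul_dotProduct, dotProduct_smul, smul_eq_mul, smul_eq_mul, mul_assoc]
  have hvv : 0 < v ⬝ᵥ v := by simpa using dotProduct_star_self_pos_iff.mpr hv0
  have h := hα (U *ᵥ v)
  rw [hKform, hQform] at h
  by_contra! hμα
  nlinarith [mul_pos (mul_pos (hα0.trans_lt hμα) (sub_pos.2 hμα)) hvv]

end Matrix

theorem lamMax_eq_ofReal_of_isLeast {n : ℕ} {X Y : Matrix (Fin n) (Fin n) ℝ} {μ : ℝ}
    (h : IsLeast {α | 0 ≤ α ∧ (α • Y - X).PosSemidef} μ) : lamMax X Y = ENNReal.ofReal μ :=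
  le_antisymm (iInf_le_of_le ⟨μ, h.1⟩ le_rfl)
    (le_iInf fun α => ENNReal.ofReal_le_ofReal (h.2 α.2))

/-- Let `K ⪰ 0` and `Q ∈ ℝ^{n×d}` with `Im Q ⊆ Im K`. Then there is
`U ∈ ℝ^{n×d}` with `KU = Q`, the matrix `QᵀU` is symmetric, and `λ_max(QQᵀ, K)` equals the
maximum (standard) eigenvalue of `QᵀU`. -/
theorem stmt_14 {n d : ℕ} (hd : 0 < d)
    (K : Matrix (Fin n) (Fin n) ℝ) (Q : Matrix (Fin n) (Fin d) ℝ)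
    (hK : K.PosSemidef)
    (him : ∀ p : Fin d → ℝ, ∃ u : Fin n → ℝ, K *ᵥ u = Q *ᵥ p) :
    ∃ U : Matrix (Fin n) (Fin d) ℝ, K * U = Q ∧ (Qᵀ * U).IsSymm ∧
      ∃ μ : ℝ,
        IsGreatest {μ' : ℝ | ∃ v : Fin d → ℝ, v ≠ 0 ∧ (Qᵀ * U) *ᵥ v = μ' • v} μ ∧
        lamMax (Q * Qᵀ) K = ENNReal.ofReal μ := by
  obtain ⟨U, hKU⟩ := exists_mul_eq_of_forall_exists_mulVec_eq him
  have hN : (Qᵀ * U).PosSemidef := by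
    rw [← hKU, transpose_mul, (isHermitian_iff_isSymm.mp hK.isHermitian).eq]
    simpa using hK.conjTranspose_mul_mul_same U
  have : Nonempty (Fin d) := ⟨⟨0, hd⟩⟩
  obtain ⟨i₀, hi₀⟩ := Finite.exists_max hN.isHermitian.eigenvalues
  have hμ := hN.isHermitian.isGreatest_of_forall_eigenvalues_le hi₀
  have hμ0 := hN.eigenvalues_nonneg i₀
  obtain ⟨v, hv0, hv⟩ := hμ.1
  refine ⟨U, hKU, isHermitian_iff_isSymm.mp hN.isHermitian, _, hμ,
    lamMax_eq_ofReal_of_isLeast ⟨⟨hμ0, ?_⟩, fun α hα => ?_⟩⟩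
  · exact hK.posSemidef_smul_sub_mul_transpose hKU hμ0
      (hN.isHermitian.posSemidef_smul_one_sub_of_eigenvalues_le hi₀)
  · exact le_of_posSemidef_smul_sub_mul_transpose hK.isHermitian hKU hα.1 hα.2 hv0 hv
end
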